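/- arXiv:1807.04195 — 3 statements merged into one kernel-verified Lean document; each statement's English description precedes it below -/
import Mathlib

section
/- Let w be a nonnegative weight on ℝ and w₁(t) = (1+t²)w(t). Define, on the two-branch hyperbola x² − y² = 1, the inner product ⟨f,g⟩ = ∫_ℝ [f(√(y²+1),y)g(√(y²+1),y) + f(−√(y²+1),y)g(−√(y²+1),y)] w(y) dy. Then Y_{n,1}(x,y) = p_n(w; y) and Y_{n,2}(x,y) = x·p_{n-1}(w₁; y) satisfy ⟨Y_{n,1}, Y_{m,2}⟩ = 0 for all n,m, ⟨Y_{n,1}, Y_{m,1}⟩ = 2h_n(w)δ_{n,m}, and ⟨Y_{n,2}, Y_{m,2}⟩ = 2h_{n-1}(w₁)δ_{n,m}. -/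
open MeasureTheory Real

/-! Both parametrisations `x = ±√(y²+1)` share the same `y`, so the inner product becomes twice
an integral in `y`, except that `Y_{n,1} Y_{m,2}` is odd in `x` and its two branches cancel
pointwise; for `Y_{n,2} Y_{m,2}` the factor `x² = 1 + y²` turns `w` into `w₁`. What remains is
the orthogonality of `p_n(w)` and of `p_{n-1}(w₁)`. -/

theorem integral_eval_mul_eval_eq_ite {v : ℝ → ℝ} {p : ℕ → Polynomial ℝ}
    (hdeg : ∀ n : ℕ, (p n).degree = n)
    (horth : ∀ n : ℕ, ∀ r : Polynomial ℝ, r.degree < n →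
      ∫ y, (p n).eval y * r.eval y * v y = 0)
    (n m : ℕ) :
    ∫ y, (p n).eval y * (p m).eval y * v y
      = if n = m then ∫ y, (p n).eval y ^ 2 * v y else 0 := by
  rcases lt_trichotomy n m with hlt | rfl | hgt
  · have hswap : ∀ y, (p n).eval y * (p m).eval y * v y = (p m).eval y * (p n).eval y * v y :=
      fun y => by ring
    simp_rw [hswap, if_neg hlt.ne]
    exact horth m (p n) (by rw [hdeg n]; exact_mod_cast hlt)
  · simp only [if_pos, sq]
  · rw [if_neg hgt.ne']
    exact horth n (p m) (by rw [hdeg m]; exact_mod_cast hgt)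

theorem stmt_8_general (w : ℝ → ℝ)
    (p q : ℕ → Polynomial ℝ)
    (hpdeg : ∀ n, (p n).degree = (n : ℕ))
    (hqdeg : ∀ n, (q n).degree = (n : ℕ))
    (hporth : ∀ n, ∀ r : Polynomial ℝ, r.degree < (n : ℕ) →
      ∫ y : ℝ, (p n).eval y * r.eval y * w y = 0)
    (hqorth : ∀ n, ∀ r : Polynomial ℝ, r.degree < (n : ℕ) →
      ∫ y : ℝ, (q n).eval y * r.eval y * ((1 + y^2) * w y) = 0) :
    (∀ n m : ℕ, 1 ≤ m →
      ∫ y : ℝ,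
        ((p n).eval y * (Real.sqrt (y^2 + 1) * (q (m - 1)).eval y)
          + (p n).eval y * (-Real.sqrt (y^2 + 1) * (q (m - 1)).eval y)) * w y = 0)
    ∧ (∀ n m : ℕ,
      ∫ y : ℝ, ((p n).eval y * (p m).eval y + (p n).eval y * (p m).eval y) * w y
        = if n = m then 2 * ∫ y : ℝ, ((p n).eval y)^2 * w y else 0)
    ∧ (∀ n m : ℕ, 1 ≤ n → 1 ≤ m →
      ∫ y : ℝ,
        ((Real.sqrt (y^2 + 1) * (q (n - 1)).eval y)
            * (Real.sqrt (y^2 + 1) * (q (m - 1)).eval y)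
          + (-Real.sqrt (y^2 + 1) * (q (n - 1)).eval y)
            * (-Real.sqrt (y^2 + 1) * (q (m - 1)).eval y)) * w y
        = if n = m then 2 * ∫ y : ℝ, ((q (n - 1)).eval y)^2 * ((1 + y^2) * w y)
          else 0) := by
  refine ⟨fun n m _ => ?_, fun n m => ?_, fun n m hn hm => ?_⟩
  · simp only [neg_mul, mul_neg, add_neg_cancel, zero_mul, integral_zero]
  · have hdouble : ∀ y, ((p n).eval y * (p m).eval y + (p n).eval y * (p m).eval y) * w y
        = 2 * ((p n).eval y * (p m).eval y * w y) := fun y => by ring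
    simp_rw [hdouble, integral_const_mul, integral_eval_mul_eval_eq_ite hpdeg hporth n m,
      mul_ite, mul_zero]
  · have hsq : ∀ y : ℝ, √(y ^ 2 + 1) * √(y ^ 2 + 1) = 1 + y ^ 2 := fun y => by
      rw [mul_self_sqrt (by positivity), add_comm]
    have hdouble : ∀ y,
        ((√(y ^ 2 + 1) * (q (n - 1)).eval y) * (√(y ^ 2 + 1) * (q (m - 1)).eval y)
          + (-√(y ^ 2 + 1) * (q (n - 1)).eval y) * (-√(y ^ 2 + 1) * (q (m - 1)).eval y)) * w y
        = 2 * ((q (n - 1)).eval y * (q (m - 1)).eval y * ((1 + y ^ 2) * w y)) := fun y => by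
      linear_combination (2 * (q (n - 1)).eval y * (q (m - 1)).eval y * w y) * hsq y
    have hindex : n - 1 = m - 1 ↔ n = m := by omega
    simp_rw [hdouble, integral_const_mul,
      integral_eval_mul_eval_eq_ite (v := fun y => (1 + y ^ 2) * w y) hqdeg hqorth, hindex,
      mul_ite, mul_zero]

/-- Orthogonal basis on the two-branch hyperbola `x² − y² = 1`:
`Y_{n,1}(x,y) = p_n(w; y)`, `Y_{n,2}(x,y) = x·p_{n-1}(w₁; y)` with `w₁(t) = (1+t²)w(t)`,
for the inner product summing over the two branches `x = ±√(y²+1)`. -/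
theorem stmt_8 (w : ℝ → ℝ) (hw_nonneg : ∀ t, 0 ≤ w t)
    (p q : ℕ → Polynomial ℝ)
    (hpdeg : ∀ n, (p n).degree = (n : ℕ))
    (hqdeg : ∀ n, (q n).degree = (n : ℕ))
    (hporth : ∀ n, ∀ r : Polynomial ℝ, r.degree < (n : ℕ) →
      ∫ y : ℝ, (p n).eval y * r.eval y * w y = 0)
    (hqorth : ∀ n, ∀ r : Polynomial ℝ, r.degree < (n : ℕ) →
      ∫ y : ℝ, (q n).eval y * r.eval y * ((1 + y^2) * w y) = 0) :
    (∀ n m : ℕ, 1 ≤ m →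
      ∫ y : ℝ,
        ((p n).eval y * (Real.sqrt (y^2 + 1) * (q (m - 1)).eval y)
          + (p n).eval y * (-Real.sqrt (y^2 + 1) * (q (m - 1)).eval y)) * w y = 0)
    ∧ (∀ n m : ℕ,
      ∫ y : ℝ, ((p n).eval y * (p m).eval y + (p n).eval y * (p m).eval y) * w y
        = if n = m then 2 * ∫ y : ℝ, ((p n).eval y)^2 * w y else 0)
    ∧ (∀ n m : ℕ, 1 ≤ n → 1 ≤ m →
      ∫ y : ℝ,
        ((Real.sqrt (y^2 + 1) * (q (n - 1)).eval y)
            * (Real.sqrt (y^2 + 1) * (q (m - 1)).eval y)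
          + (-Real.sqrt (y^2 + 1) * (q (n - 1)).eval y)
            * (-Real.sqrt (y^2 + 1) * (q (m - 1)).eval y)) * w y
        = if n = m then 2 * ∫ y : ℝ, ((q (n - 1)).eval y)^2 * ((1 + y^2) * w y)
          else 0) :=
  stmt_8_general w p q hpdeg hqdeg hporth hqorth
end

section
/- Let f be a function on ℝ. The change of variables y ↦ ±y, x = √(1+y²) gives: ∫_{-∞}^{∞} f(√(1+y²), y) dy = ∫_{1}^{∞} [f(x, −√(x²−1)) + f(x, √(x²−1))]·x/√(x²−1) dx, provided the integrals exist. -/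
open MeasureTheory Real Set

/-!
The upper branch `x = √(1+y²)` of the hyperbola `x² - y² = 1` is parametrised over `x > 1` by
`y = ±√(x²-1)`, with `dy/dx = ±x/√(x²-1)`. Splitting `ℝ` at `0` and reflecting the negative half
reduces the identity to the one-dimensional change of variables `y = √(x²-1)` from `(1, ∞)`
onto `(0, ∞)`.
-/

lemma hasDerivAt_sqrt_sq_sub_one {x : ℝ} (hx : 1 < x) :
    HasDerivAt (fun x : ℝ => √(x ^ 2 - 1)) (x / √(x ^ 2 - 1)) x := by
  have hpos : 0 < x ^ 2 - 1 := by nlinarith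
  convert (hasDerivAt_pow 2 x |>.sub_const 1).sqrt hpos.ne' using 1
  field_simp
  ring

lemma injOn_sqrt_sq_sub_one : InjOn (fun x : ℝ => √(x ^ 2 - 1)) (Ioi 1) := by
  intro a (ha : 1 < a) b (hb : 1 < b) h
  have hsq : a ^ 2 - 1 = b ^ 2 - 1 := (sqrt_inj (by nlinarith) (by nlinarith)).1 h
  nlinarith

lemma image_sqrt_sq_sub_one_Ioi_one : (fun x : ℝ => √(x ^ 2 - 1)) '' Ioi 1 = Ioi 0 := by
  ext y
  constructor
  · rintro ⟨x, hx : 1 < x, rfl⟩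
    exact sqrt_pos.2 (by nlinarith)
  · intro (hy : 0 < y)
    refine ⟨√(1 + y ^ 2), (lt_sqrt (by positivity)).2 (by nlinarith), ?_⟩
    dsimp only
    rw [sq_sqrt (by positivity), add_sub_cancel_left, sqrt_sq hy.le]

lemma sqrt_one_add_sqrt_sq_sub_one_sq {x : ℝ} (hx : 1 ≤ x) : √(1 + √(x ^ 2 - 1) ^ 2) = x := by
  rw [sq_sqrt (by nlinarith), add_sub_cancel, sqrt_sq (by linarith)]

lemma abs_deriv_smul_sqrt_sq_sub_one (F : ℝ → ℝ → ℝ) {x : ℝ} (hx : 1 < x) :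
    |x / √(x ^ 2 - 1)| • F √(1 + √(x ^ 2 - 1) ^ 2) √(x ^ 2 - 1)
      = F x √(x ^ 2 - 1) * (x / √(x ^ 2 - 1)) := by
  rw [abs_of_nonneg (by positivity), sqrt_one_add_sqrt_sq_sub_one_sq hx.le, smul_eq_mul, mul_comm]

theorem integrableOn_Ioi_one_of_integrableOn_hyperbola {F : ℝ → ℝ → ℝ}
    (hF : IntegrableOn (fun y => F √(1 + y ^ 2) y) (Ioi 0)) :
    IntegrableOn (fun x => F x √(x ^ 2 - 1) * (x / √(x ^ 2 - 1))) (Ioi 1) := by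
  rw [← image_sqrt_sq_sub_one_Ioi_one, integrableOn_image_iff_integrableOn_abs_deriv_smul
    measurableSet_Ioi (fun x hx => (hasDerivAt_sqrt_sq_sub_one hx).hasDerivWithinAt)
    injOn_sqrt_sq_sub_one] at hF
  exact hF.congr_fun (fun x hx => abs_deriv_smul_sqrt_sq_sub_one F hx) measurableSet_Ioi

theorem integral_Ioi_one_eq_integral_hyperbola (F : ℝ → ℝ → ℝ) :
    ∫ x in Ioi 1, F x √(x ^ 2 - 1) * (x / √(x ^ 2 - 1)) = ∫ y in Ioi 0, F √(1 + y ^ 2) y := by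
  rw [← image_sqrt_sq_sub_one_Ioi_one, integral_image_eq_integral_abs_deriv_smul
    measurableSet_Ioi (fun x hx => (hasDerivAt_sqrt_sq_sub_one hx).hasDerivWithinAt)
    injOn_sqrt_sq_sub_one]
  exact setIntegral_congr_fun measurableSet_Ioi
    (fun x hx => (abs_deriv_smul_sqrt_sq_sub_one F hx).symm)

/-- Change of variables on the one-branch hyperbola:
`∫_ℝ f(√(1+y²), y) dy = ∫_1^∞ [f(x, −√(x²−1)) + f(x, √(x²−1))]·x/√(x²−1) dx`. -/
theorem stmt_10 (f : ℝ → ℝ → ℝ)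
    (hf : Integrable (fun y : ℝ => f (Real.sqrt (1 + y^2)) y)) :
    ∫ y : ℝ, f (Real.sqrt (1 + y^2)) y
      = ∫ x in Set.Ioi (1:ℝ),
          (f x (-Real.sqrt (x^2 - 1)) + f x (Real.sqrt (x^2 - 1)))
            * (x / Real.sqrt (x^2 - 1)) := by
  have hf_neg : Integrable (fun y : ℝ => f √(1 + y ^ 2) (-y)) := by
    simpa only [neg_sq] using hf.comp_neg
  have h_lower : ∫ y in Iic 0, f √(1 + y ^ 2) y = ∫ y in Ioi 0, f √(1 + y ^ 2) (-y) := by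
    rw [← neg_zero, ← integral_comp_neg_Ioi]
    simp only [neg_sq, neg_zero]
  have h_upper_int := integrableOn_Ioi_one_of_integrableOn_hyperbola hf.integrableOn
  have h_lower_int : IntegrableOn (fun x => f x (-√(x ^ 2 - 1)) * (x / √(x ^ 2 - 1))) (Ioi 1) :=
    integrableOn_Ioi_one_of_integrableOn_hyperbola (F := fun x y => f x (-y)) hf_neg.integrableOn
  rw [← intervalIntegral.integral_Iic_add_Ioi hf.integrableOn hf.integrableOn, h_lower,
    ← integral_Ioi_one_eq_integral_hyperbola (fun x y => f x (-y)),
    ← integral_Ioi_one_eq_integral_hyperbola f, ← integral_add h_lower_int h_upper_int]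
  simp only [add_mul]
end

section
/- Let w_{-1/2} be a weight on [-1,1] and let {t_j}_{j=1}^n, {λ_j}_{j=1}^n be the n-point Gaussian quadrature nodes and weights for w_{-1/2} (nodes being zeros of p_n(w_{-1/2})). Set x_j = t_j, y_j = √(1−t_j²). Then for 1 ≤ k, ℓ ≤ n, the discrete inner product ⟨f,g⟩_n = Σ_j λ_j [f(x_j,y_j)g(x_j,y_j) + f(x_j,−y_j)g(x_j,−y_j)] satisfies ⟨Y_{k,2}, Y_{ℓ,2}⟩_n = 0 for k ≠ ℓ and ⟨Y_{n,2}, Y_{n,2}⟩_n ≠ 0, where Y_{k,2}(x,y) = y·p_{k−1}(w_{1/2}; x) and w_{1/2}(t) = (1−t²)w_{-1/2}(t). -/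
/-!
Since `√(1 - t²)² = 1 - t²`, the discrete inner product of `Y_{k,2}` and `Y_{ℓ,2}` is twice the
quadrature sum of the polynomial `(1 - t²) q_{k-1} q_{ℓ-1}`, of degree `k + ℓ < 2n`. Gaussian
quadrature turns it into `2 ∫ q_{k-1} q_{ℓ-1} w_{1/2}`, which vanishes by orthogonality when
`k ≠ ℓ`. For `k = ℓ = n` the sum has positive coefficients times `q_{n-1}(t_j)²`, and the
polynomial `q_{n-1}` of degree `n - 1` cannot vanish at all `n` distinct nodes.
-/

open Polynomial

lemma sqrt_mul_mul_sqrt_mul_add_neg {s : ℝ} (hs : 0 ≤ s) (a b : ℝ) :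
    (√s * a) * (√s * b) + (-√s * a) * (-√s * b) = 2 * (s * (a * b)) := by
  linear_combination (2 * a * b) * Real.sq_sqrt hs

lemma degree_one_sub_X_sq_mul_mul {q : ℕ → ℝ[X]} (hqdeg : ∀ k, (q k).degree = k) (a b : ℕ) :
    ((1 - X ^ 2) * (q a * q b)).degree = ((2 + a + b : ℕ) : WithBot ℕ) := by
  have h2 : (1 - X ^ 2 : ℝ[X]).degree = 2 := by compute_degree!
  rw [degree_mul, degree_mul, h2, hqdeg a, hqdeg b]
  norm_cast
  omega

lemma quadrature_sum_one_sub_sq_mul_eq_zero {ι : Type*} [Fintype ι] {w : ℝ → ℝ}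
    {q : ℕ → ℝ[X]} (hqdeg : ∀ k, (q k).degree = k)
    (hqorth : ∀ k : ℕ, ∀ r : ℝ[X], r.degree < k →
      ∫ t in (-1:ℝ)..1, (q k).eval t * r.eval t * ((1 - t ^ 2) * w t) = 0)
    {t lam : ι → ℝ} {m : ℕ}
    (hquad : ∀ r : ℝ[X], r.degree < m → ∫ s in (-1:ℝ)..1, r.eval s * w s = ∑ j, lam j * r.eval (t j))
    {a b : ℕ} (hab : a ≠ b) (hm : 2 + a + b < m) :
    ∑ j, lam j * ((1 - t j ^ 2) * ((q a).eval (t j) * (q b).eval (t j))) = 0 := by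
  wlog hba : b < a generalizing a b
  · simp_rw [mul_comm ((q a).eval _)]
    exact this hab.symm (by omega) (by omega)
  have hdeg : ((1 - X ^ 2) * (q a * q b)).degree < (m : WithBot ℕ) := by
    rw [degree_one_sub_X_sq_mul_mul hqdeg]
    exact_mod_cast hm
  have hint : ∫ s in (-1:ℝ)..1, ((1 - X ^ 2) * (q a * q b)).eval s * w s
      = ∫ s in (-1:ℝ)..1, (q a).eval s * (q b).eval s * ((1 - s ^ 2) * w s) := by
    refine intervalIntegral.integral_congr fun s _ => ?_
    simp only [eval_mul, eval_sub, eval_one, eval_pow, eval_X]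
    ring
  have horth := hqorth a (q b) (by rw [hqdeg b]; exact_mod_cast hba)
  rw [← horth, ← hint, hquad _ hdeg]
  simp only [eval_mul, eval_sub, eval_one, eval_pow, eval_X]

lemma sum_mul_eval_mul_self_pos {ι : Type*} [Fintype ι] {t c : ι → ℝ}
    (ht : Function.Injective t) (hc : ∀ j, 0 < c j) {r : ℝ[X]} (hr : r ≠ 0)
    (hdeg : r.natDegree < Fintype.card ι) :
    0 < ∑ j, c j * (r.eval (t j) * r.eval (t j)) := by
  obtain ⟨j, hj⟩ : ∃ j, r.eval (t j) ≠ 0 := by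
    by_contra! h
    exact hr (eq_zero_of_natDegree_lt_card_of_eval_eq_zero r ht h hdeg)
  exact Finset.sum_pos' (fun i _ => mul_nonneg (hc i).le (mul_self_nonneg _))
    ⟨j, Finset.mem_univ j, mul_pos (hc j) (mul_self_pos.mpr hj)⟩

theorem stmt_17_general (w : ℝ → ℝ)
    (q : ℕ → Polynomial ℝ)
    (hqdeg : ∀ k, (q k).degree = (k : ℕ))
    (hqorth : ∀ k, ∀ r : Polynomial ℝ, r.degree < (k : ℕ) →
      ∫ t in (-1:ℝ)..1, (q k).eval t * r.eval t * ((1 - t^2) * w t) = 0)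
    (n : ℕ) (hn : 1 ≤ n)
    (t lam : Fin n → ℝ)
    (ht_mem : ∀ j, t j ∈ Set.Ioo (-1 : ℝ) 1)
    (ht_inj : Function.Injective t)
    (hlam_pos : ∀ j, 0 < lam j)
    (hquad : ∀ r : Polynomial ℝ, r.degree < (2 * n : ℕ) →
      ∫ s in (-1:ℝ)..1, r.eval s * w s = ∑ j, lam j * r.eval (t j)) :
    (∀ k ℓ : ℕ, 1 ≤ k → k ≤ n → 1 ≤ ℓ → ℓ ≤ n → k ≠ ℓ →
      ∑ j, lam j *
        ((Real.sqrt (1 - (t j)^2) * (q (k - 1)).eval (t j))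
            * (Real.sqrt (1 - (t j)^2) * (q (ℓ - 1)).eval (t j))
          + (-Real.sqrt (1 - (t j)^2) * (q (k - 1)).eval (t j))
            * (-Real.sqrt (1 - (t j)^2) * (q (ℓ - 1)).eval (t j))) = 0)
    ∧ (∑ j, lam j *
        ((Real.sqrt (1 - (t j)^2) * (q (n - 1)).eval (t j))
            * (Real.sqrt (1 - (t j)^2) * (q (n - 1)).eval (t j))
          + (-Real.sqrt (1 - (t j)^2) * (q (n - 1)).eval (t j))
            * (-Real.sqrt (1 - (t j)^2) * (q (n - 1)).eval (t j)))) ≠ 0 := by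
  have hpos : ∀ j, 0 < 1 - t j ^ 2 := fun j => by
    obtain ⟨h₁, h₂⟩ := ht_mem j
    nlinarith
  simp_rw [fun j => sqrt_mul_mul_sqrt_mul_add_neg (hpos j).le, mul_left_comm (lam _) 2,
    ← Finset.mul_sum]
  refine ⟨fun k ℓ hk1 hkn hl1 hln hkl => ?_, ?_⟩
  · exact mul_eq_zero_of_right _ <|
      quadrature_sum_one_sub_sq_mul_eq_zero hqdeg hqorth hquad (by omega) (by omega)
  · have hqne : q (n - 1) ≠ 0 := fun h => by simpa [h] using hqdeg (n - 1)
    have hdeg : (q (n - 1)).natDegree < Fintype.card (Fin n) := by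
      rw [natDegree_eq_of_degree_eq_some (hqdeg (n - 1)), Fintype.card_fin]
      omega
    simp_rw [← mul_assoc (lam _) (1 - _)]
    exact mul_ne_zero two_ne_zero
      (sum_mul_eval_mul_self_pos ht_inj (fun j => mul_pos (hlam_pos j) (hpos j)) hqne hdeg).ne'

/-- Discrete orthogonality of the second family `Y_{k,2}(x,y) = y·p_{k-1}(w_{1/2};x)`
under the discrete inner product built from `n`-point Gaussian quadrature for
`w_{-1/2}` on `[-1,1]` (nodes `t_j` the zeros of `p_n(w_{-1/2})`, weights `λ_j`),
with `y_j = √(1−t_j²)` and `w_{1/2}(t) = (1−t²)·w_{-1/2}(t)`: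
`⟨Y_{k,2},Y_{ℓ,2}⟩_n = 0` for `k ≠ ℓ` (`1 ≤ k,ℓ ≤ n`) and `⟨Y_{n,2},Y_{n,2}⟩_n ≠ 0`. -/
theorem stmt_17 (w : ℝ → ℝ) (hw_nonneg : ∀ t, 0 ≤ w t)
    (p q : ℕ → Polynomial ℝ)
    (hpdeg : ∀ k, (p k).degree = (k : ℕ))
    (hqdeg : ∀ k, (q k).degree = (k : ℕ))
    (hqorth : ∀ k, ∀ r : Polynomial ℝ, r.degree < (k : ℕ) →
      ∫ t in (-1:ℝ)..1, (q k).eval t * r.eval t * ((1 - t^2) * w t) = 0)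
    (n : ℕ) (hn : 1 ≤ n)
    (t lam : Fin n → ℝ)
    (ht_mem : ∀ j, t j ∈ Set.Ioo (-1 : ℝ) 1)
    (ht_zero : ∀ j, (p n).eval (t j) = 0)
    (ht_inj : Function.Injective t)
    (hlam_pos : ∀ j, 0 < lam j)
    (hquad : ∀ r : Polynomial ℝ, r.degree < (2 * n : ℕ) →
      ∫ s in (-1:ℝ)..1, r.eval s * w s = ∑ j, lam j * r.eval (t j)) :
    (∀ k ℓ : ℕ, 1 ≤ k → k ≤ n → 1 ≤ ℓ → ℓ ≤ n → k ≠ ℓ →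
      ∑ j, lam j *
        ((Real.sqrt (1 - (t j)^2) * (q (k - 1)).eval (t j))
            * (Real.sqrt (1 - (t j)^2) * (q (ℓ - 1)).eval (t j))
          + (-Real.sqrt (1 - (t j)^2) * (q (k - 1)).eval (t j))
            * (-Real.sqrt (1 - (t j)^2) * (q (ℓ - 1)).eval (t j))) = 0)
    ∧ (∑ j, lam j *
        ((Real.sqrt (1 - (t j)^2) * (q (n - 1)).eval (t j))
            * (Real.sqrt (1 - (t j)^2) * (q (n - 1)).eval (t j))
          + (-Real.sqrt (1 - (t j)^2) * (q (n - 1)).eval (t j))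
            * (-Real.sqrt (1 - (t j)^2) * (q (n - 1)).eval (t j)))) ≠ 0 :=
  stmt_17_general w q hqdeg hqorth n hn t lam ht_mem ht_inj hlam_pos hquad
end
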